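/- Let X be the constructed set. For any choice of bijections σ_j : A_j → {1,...,r} \ {i(j)} for each 1 ≤ j ≤ d, define X_i = {x^i} ∪ {σ_j^{-1}(i) : 1 ≤ j ≤ d, i ≠ i(j)}. Then 0 ∈ conv(X_i) for all i, and X_1, ..., X_r is a Tverberg partition of X. -/

import Mathlib

/-!
The part `X_i` contains `x^i`, which is nonpositive and negative exactly in the coordinates `j`
with `i ≠ i(j)`; for each such `j` it also contains `σ_j⁻¹(i) = c e^j` with `c ≥ 1`. Adding
`-x^i_j / c` times each of these to `x^i` gives `0`, so `0` is a positive combination of points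
of `X_i`. The parts cover `X` because `σ_j` assigns every point of `A_j` to some part, and they
are disjoint because the `x^i` are distinct and nonpositive while `A_j` lies on the positive
`j`-th axis.
-/

open Finset Set

/-- The standard basis vector `e^j` of `ℝ^d`. -/
noncomputable def stdVec (d : ℕ) (j : Fin d) : Fin d → ℝ := Pi.single j 1

/-- The set `A_j = {e^j, 2e^j, ..., (r-1)e^j}`. -/
def Aset (d r : ℕ) (j : Fin d) : Set (Fin d → ℝ) :=
  {v | ∃ k : ℕ, 1 ≤ k ∧ k ≤ r - 1 ∧ v = (k : ℝ) • stdVec d j}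

/-- The point `x^i`, with `x^i_j = 0` if `i = i(j)` and `x^i_j = -i` otherwise
(indices taken in `{1,...,r}`, so `Fin r` index `i` corresponds to `i+1`). -/
def xpt (d r : ℕ) (ι : Fin d → Fin r) (i : Fin r) : Fin d → ℝ :=
  fun j => if ι j = i then 0 else -((i : ℕ) + 1 : ℝ)

/-- The set `A = {x^1, ..., x^r}`. -/
def Apts (d r : ℕ) (ι : Fin d → Fin r) : Set (Fin d → ℝ) := Set.range (xpt d r ι)

/-- The constructed set `X = A ∪ A_1 ∪ ⋯ ∪ A_d`. -/
def Xset (d r : ℕ) (ι : Fin d → Fin r) : Set (Fin d → ℝ) :=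
  Apts d r ι ∪ ⋃ j, Aset d r j

/-- `P : Fin r → Set (Fin d → ℝ)` is a Tverberg partition of `X`:
a partition of `X` into pairwise disjoint parts whose convex hulls share a point. -/
def IsTverbergPartition (d r : ℕ) (X : Set (Fin d → ℝ))
    (P : Fin r → Set (Fin d → ℝ)) : Prop :=
  (⋃ i, P i) = X ∧ (∀ i i', i ≠ i' → Disjoint (P i) (P i')) ∧
    ∃ p : Fin d → ℝ, ∀ i, p ∈ convexHull ℝ (P i)

lemma zero_mem_convexHull_of_nonpos {ι : Type*} [Fintype ι] [DecidableEq ι]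
    {s : Set (ι → ℝ)} {x : ι → ℝ} (hx : x ∈ s) (hx0 : ∀ j, x j ≤ 0)
    (hsingle : ∀ j, x j < 0 → ∃ c > 0, Pi.single j c ∈ s) :
    (0 : ι → ℝ) ∈ convexHull ℝ s := by
  choose! c hc hcs using hsingle
  -- `x + ∑ⱼ (-xⱼ / cⱼ) • cⱼ eⱼ = 0`; coordinates with `xⱼ = 0` get weight `0` on `x` itself.
  let w : Option ι → ℝ := fun o => o.elim 1 fun j => -x j / c j
  let z : Option ι → ι → ℝ := fun o => o.elim x fun j => if x j < 0 then Pi.single j (c j) else x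
  have hw : ∀ o, 0 ≤ w o := by
    rintro (_ | j)
    · exact zero_le_one
    · rcases (hx0 j).lt_or_eq with hj | hj
      · exact div_nonneg (by linarith) (hc j hj).le
      · simp [w, hj]
  have hz : ∀ o, z o ∈ s := by
    rintro (_ | j)
    · exact hx
    · by_cases hj : x j < 0
      · simpa [z, hj] using hcs j hj
      · simpa [z, hj] using hx
  have hwz : ∀ j, w (some j) • z (some j) = Pi.single j (-x j) := by
    intro j
    rcases (hx0 j).lt_or_eq with hj | hj
    · simp [w, z, hj, ← Pi.single_smul, (hc j hj).ne']
    · simp [w, z, hj]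
  have hsum : ∑ o, w o • z o = 0 := by
    rw [Fintype.sum_option]
    simp only [hwz, Finset.univ_sum_single]
    change (1 : ℝ) • x + -x = 0
    rw [one_smul, add_neg_cancel]
  have hpos : 0 < ∑ o, w o := by
    simp only [Fintype.sum_option]
    exact add_pos_of_pos_of_nonneg one_pos (Finset.sum_nonneg fun j _ => hw (some j))
  simpa [Finset.centerMass, hsum] using
    Finset.centerMass_mem_convexHull Finset.univ (fun o _ => hw o) hpos (fun o _ => hz o)

section Construction

variable {d r : ℕ}

lemma exists_eq_single_of_mem_Aset {j : Fin d} {v : Fin d → ℝ} (hv : v ∈ Aset d r j) :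
    ∃ c : ℝ, 1 ≤ c ∧ v = Pi.single j c := by
  obtain ⟨k, hk, -, rfl⟩ := hv
  exact ⟨k, by exact_mod_cast hk, by simp [stdVec, ← Pi.single_smul]⟩

lemma one_le_apply_of_mem_Aset {j : Fin d} {v : Fin d → ℝ} (hv : v ∈ Aset d r j) :
    1 ≤ v j := by
  obtain ⟨c, hc, rfl⟩ := exists_eq_single_of_mem_Aset hv
  simpa using hc

lemma eq_of_mem_Aset_of_mem_Aset {j j' : Fin d} {v : Fin d → ℝ}
    (hv : v ∈ Aset d r j) (hv' : v ∈ Aset d r j') : j = j' := by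
  obtain ⟨c, hc, rfl⟩ := exists_eq_single_of_mem_Aset hv'
  by_contra hne
  have := one_le_apply_of_mem_Aset hv
  rw [Pi.single_eq_of_ne hne] at this
  linarith

lemma xpt_apply_nonpos (ι : Fin d → Fin r) (i : Fin r) (j : Fin d) : xpt d r ι i j ≤ 0 := by
  unfold xpt
  split_ifs
  · rfl
  · linarith [(i : ℕ).cast_nonneg (α := ℝ)]

lemma xpt_apply_neg_iff (ι : Fin d → Fin r) (i : Fin r) (j : Fin d) :
    xpt d r ι i j < 0 ↔ ι j ≠ i := by
  unfold xpt
  split_ifs with h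
  · simp [h]
  · simp only [h, ne_eq, not_false_eq_true, iff_true, neg_lt_zero]
    positivity

lemma xpt_injective (hd : 1 ≤ d) (ι : Fin d → Fin r) : Function.Injective (xpt d r ι) := by
  intro i i' h
  have h₀ := congrFun h ⟨0, hd⟩
  unfold xpt at h₀
  split_ifs at h₀ with h₁ h₂ h₂
  · exact h₁.symm.trans h₂
  · linarith [(i' : ℕ).cast_nonneg (α := ℝ)]
  · linarith [(i : ℕ).cast_nonneg (α := ℝ)]
  · exact Fin.ext (by exact_mod_cast (by linarith : ((i : ℕ) : ℝ) = i'))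

lemma xpt_not_mem_Aset (ι : Fin d → Fin r) (i : Fin r) (j : Fin d) :
    xpt d r ι i ∉ Aset d r j := fun h => by
  linarith [one_le_apply_of_mem_Aset h, xpt_apply_nonpos ι i j]

variable (ι : Fin d → Fin r) (σ : ∀ j : Fin d, (Aset d r j) ≃ {i : Fin r // i ≠ ι j})

def tverbergPart (i : Fin r) : Set (Fin d → ℝ) :=
  {xpt d r ι i} ∪
    {v | ∃ (j : Fin d) (hv : v ∈ Aset d r j), ((σ j ⟨v, hv⟩ : {i // i ≠ ι j}) : Fin r) = i}

lemma symm_mem_tverbergPart (j : Fin d) (i : Fin r) (h : i ≠ ι j) :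
    ((σ j).symm ⟨i, h⟩ : Fin d → ℝ) ∈ tverbergPart ι σ i :=
  Or.inr ⟨j, Subtype.mem _, by simp⟩

lemma zero_mem_convexHull_tverbergPart (i : Fin r) :
    (0 : Fin d → ℝ) ∈ convexHull ℝ (tverbergPart ι σ i) := by
  refine zero_mem_convexHull_of_nonpos (Or.inl rfl) (xpt_apply_nonpos ι i) fun j hj => ?_
  have hi : i ≠ ι j := ((xpt_apply_neg_iff ι i j).mp hj).symm
  obtain ⟨c, hc, hv⟩ := exists_eq_single_of_mem_Aset ((σ j).symm ⟨i, hi⟩).2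
  exact ⟨c, one_pos.trans_le hc, hv ▸ symm_mem_tverbergPart ι σ j i hi⟩

lemma iUnion_tverbergPart : ⋃ i, tverbergPart ι σ i = Xset d r ι := by
  ext v
  simp only [tverbergPart, Xset, Apts, Set.mem_iUnion, Set.mem_union, Set.mem_singleton_iff, Set.mem_range]
  constructor
  · rintro ⟨i, rfl | ⟨j, hv, -⟩⟩
    exacts [Or.inl ⟨i, rfl⟩, Or.inr ⟨j, hv⟩]
  · rintro (⟨i, rfl⟩ | ⟨j, hv⟩)
    exacts [⟨i, Or.inl rfl⟩, ⟨σ j ⟨v, hv⟩, Or.inr ⟨j, hv, rfl⟩⟩]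

lemma disjoint_tverbergPart (hd : 1 ≤ d) {i i' : Fin r} (hne : i ≠ i') :
    Disjoint (tverbergPart ι σ i) (tverbergPart ι σ i') := by
  rw [Set.disjoint_left]
  rintro v (rfl | ⟨j, hv, rfl⟩) (h' | ⟨j', hv', h'⟩)
  · exact hne (xpt_injective hd ι h')
  · exact xpt_not_mem_Aset ι i j' hv'
  · exact xpt_not_mem_Aset ι i' j (h' ▸ hv)
  · obtain rfl := eq_of_mem_Aset_of_mem_Aset hv hv'
    exact hne h'

end Construction

theorem bijections_give_tverberg_partition_general (d r : ℕ) (hd : 1 ≤ d)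
    (ι : Fin d → Fin r)
    (σ : ∀ j : Fin d, (Aset d r j) ≃ {i : Fin r // i ≠ ι j}) :
    let P : Fin r → Set (Fin d → ℝ) := fun i =>
      {xpt d r ι i} ∪
        {v | ∃ (j : Fin d) (hv : v ∈ Aset d r j), ((σ j ⟨v, hv⟩ : {i // i ≠ ι j}) : Fin r) = i}
    (∀ i, (0 : Fin d → ℝ) ∈ convexHull ℝ (P i)) ∧
      IsTverbergPartition d r (Xset d r ι) P :=
  ⟨zero_mem_convexHull_tverbergPart ι σ, iUnion_tverbergPart ι σ,
    fun _ _ => disjoint_tverbergPart ι σ hd, 0, zero_mem_convexHull_tverbergPart ι σ⟩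

/-- Any choice of bijections `σ_j : A_j ≃ {1,...,r} \ {i(j)}` yields a Tverberg
partition of the constructed set `X`, with parts
`X_i = {x^i} ∪ {σ_j⁻¹(i) : i ≠ i(j)}`, each containing `0` in its convex hull. -/
theorem bijections_give_tverberg_partition (d r : ℕ) (hd : 1 ≤ d) (hr : 1 ≤ r)
    (a : Fin r → ℕ) (hpos : ∀ i, 1 ≤ a i) (hle : ∀ i, a i ≤ d + 1)
    (hsum : ∑ i, a i = (d + 1) * (r - 1) + 1)
    (ι : Fin d → Fin r)
    (hι : ∀ i, (Finset.univ.filter fun j => ι j = i).card = d + 1 - a i)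
    (σ : ∀ j : Fin d, (Aset d r j) ≃ {i : Fin r // i ≠ ι j}) :
    let P : Fin r → Set (Fin d → ℝ) := fun i =>
      {xpt d r ι i} ∪
        {v | ∃ (j : Fin d) (hv : v ∈ Aset d r j), ((σ j ⟨v, hv⟩ : {i // i ≠ ι j}) : Fin r) = i}
    (∀ i, (0 : Fin d → ℝ) ∈ convexHull ℝ (P i)) ∧
      IsTverbergPartition d r (Xset d r ι) P :=
  bijections_give_tverberg_partition_general d r hd ι σ
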